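/- arXiv:1801.08512 — 4 statements merged into one kernel-verified Lean document; each statement's English description precedes it below -/
import Mathlib

section
/- Let p ≥ 1, L ≥ 1, and let R₀ be a p×p real symmetric positive definite matrix with all diagonal entries equal to 1, whose inverse K₀ := R₀⁻¹ satisfies 1/L ≤ λ_min(K₀) ≤ λ_max(K₀) ≤ L. Let R̂ be a p×p real symmetric matrix with all diagonal entries equal to 1 and ‖R̂ − R₀‖_∞ ≤ λ₀ for some λ₀ > 0. Let s denote the number of nonzero off-diagonal entries of K₀ and set c_L := 8L². Suppose λ satisfies 2λ₀ ≤ λ ≤ 1/(8L²) and 8 c_L² s λ² ≤ λ₀/(2L). Let Θ̂_norm be a minimizer of Θ ↦ trace(R̂Θ) − log det(Θ) + λ‖Θ⁻‖₁ over the set of symmetric positive definite p×p matrices. Then ‖Θ̂_norm − K₀‖_F² + λ‖Θ̂_norm⁻ − K₀⁻‖₁ ≤ 8 c_L² s λ², and |||Θ̂_norm − K₀|||₁ ≤ 8 c_L s λ² + 8 c_L² s λ. -/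
open Matrix
open scoped BigOperators

/-- Entrywise supremum norm of a matrix. -/
noncomputable def supNorm {p : ℕ} (A : Matrix (Fin p) (Fin p) ℝ) : ℝ :=
  ⨆ i, ⨆ j, |A i j|

/-- ℓ1-operator norm (maximum column ℓ1-norm) of a matrix. -/
noncomputable def opNorm1 {p : ℕ} (A : Matrix (Fin p) (Fin p) ℝ) : ℝ :=
  ⨆ j, ∑ i, |A i j|

/-- Frobenius norm of a matrix. -/
noncomputable def frobNorm {p : ℕ} (A : Matrix (Fin p) (Fin p) ℝ) : ℝ :=
  Real.sqrt (∑ i, ∑ j, (A i j) ^ 2)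

/-- ℓ1-norm of the off-diagonal part of a matrix: `‖A⁻‖₁ = Σ_{i≠j} |A_{ij}|`. -/
noncomputable def offL1 {p : ℕ} (A : Matrix (Fin p) (Fin p) ℝ) : ℝ :=
  ∑ i, ∑ j, if i = j then 0 else |A i j|

/-- The (normalized) graphical Lasso objective `Θ ↦ trace(R̂Θ) − log det Θ + λ‖Θ⁻‖₁`. -/
noncomputable def glassoObj {p : ℕ} (Rhat : Matrix (Fin p) (Fin p) ℝ) (lam : ℝ)
    (Θ : Matrix (Fin p) (Fin p) ℝ) : ℝ :=
  (Rhat * Θ).trace - Real.log Θ.det + lam * offL1 Θ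

/-!
Write `Δ = Θ̂ - K₀` and let `mᵢ` be the eigenvalues of `B Δ Bᵀ`, where `B K₀ Bᵀ = 1`; they are the
eigenvalues of `R₀^{1/2} Δ R₀^{1/2}`, so `tr (R₀ Δ) = ∑ mᵢ`, `det Θ̂ = det K₀ ∏ (1 + mᵢ)`, and the
eigenvalue bounds on `K₀` make `∑ mᵢ²` comparable to `‖Δ‖_F²` up to the factor `L²`. Comparing the
objective at `Θ̂` and at `K₀`, the noise `tr ((R̂ - R₀) Δ)` costs at most `λ₀ ‖Δ⁻‖₁` (the diagonals
agree) and the penalty loses at most twice the mass of `Δ` on the off-diagonal support of `K₀`,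
which is at most `√s ‖Δ‖_F`. This gives the basic inequality
`∑ (mᵢ - log (1 + mᵢ)) + λ/2 ‖Δ⁻‖₁ ≤ 2 λ √s ‖Δ‖_F`.
Since `x ↦ x - log (1 + x)` is convex and vanishes at `0`, the inequality survives scaling `m` by
`t ∈ [0, 1]`; choosing `t` with `|t mᵢ| ≤ 1/2`, where the function dominates `x²/8`, shows that
`‖Δ‖_F` is so small that `t = 1` is admissible, and the quadratic bound at `t = 1` is the oracle
inequality. The `ℓ₁`-operator bound then follows from `|||Δ|||₁ ≤ ‖Δ‖_F + ‖Δ⁻‖₁`.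
-/

open Finset

namespace Real

lemma sq_div_eight_le_sub_log_one_add {x : ℝ} (hx : |x| ≤ 1 / 2) :
    x ^ 2 / 8 ≤ x - log (1 + x) := by
  obtain ⟨hx₁, hx₂⟩ := abs_le.1 hx
  have hf : 0 ≤ (1 - x / 8) ^ 2 / 4 - 1 / 8 := by nlinarith
  have hpoly : 1 + x ≤ (1 + (x - x ^ 2 / 8) / 2) ^ 2 := by nlinarith [mul_nonneg (sq_nonneg x) hf]
  have hexp : (1 + (x - x ^ 2 / 8) / 2) ^ 2 ≤ exp (x - x ^ 2 / 8) := by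
    rw [show exp (x - x ^ 2 / 8) = exp ((x - x ^ 2 / 8) / 2) ^ 2 by
      rw [← exp_nat_mul]; congr 1; ring]
    exact pow_le_pow_left₀ (by nlinarith) (by linarith [add_one_le_exp ((x - x ^ 2 / 8) / 2)]) 2
  linarith [(log_le_iff_le_exp (by linarith)).2 (hpoly.trans hexp)]

lemma mul_sub_log_one_add_mul_le {x t : ℝ} (hx : 0 < 1 + x) (ht₀ : 0 ≤ t) (ht₁ : t ≤ 1) :
    t * x - log (1 + t * x) ≤ t * (x - log (1 + x)) := by
  have h := strictConcaveOn_log_Ioi.concaveOn.2 (Set.mem_Ioi.2 one_pos) (Set.mem_Ioi.2 hx)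
    (sub_nonneg.2 ht₁) ht₀ (by ring)
  simp only [smul_eq_mul, log_one, mul_zero, mul_one, zero_add] at h
  have : 1 - t + t * (1 + x) = 1 + t * x := by ring
  rw [this] at h
  linarith

end Real

namespace Matrix

variable {n : Type*} [Fintype n]

lemma sum_sq_eq_trace_mul_transpose (A : Matrix n n ℝ) :
    ∑ i, ∑ j, A i j ^ 2 = (A * Aᵀ).trace := by
  simp [trace, mul_apply, sq]

variable [DecidableEq n]

lemma sum_sq_conj_of_transpose_mul_self {U : Matrix n n ℝ} (hU : Uᵀ * U = 1) (A : Matrix n n ℝ) :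
    ∑ i, ∑ j, (U * A * Uᵀ) i j ^ 2 = ∑ i, ∑ j, A i j ^ 2 := by
  have h : U * A * Uᵀ * (U * A * Uᵀ)ᵀ = U * (A * Aᵀ) * Uᵀ := by
    simp only [transpose_mul, transpose_transpose, Matrix.mul_assoc]
    rw [← Matrix.mul_assoc Uᵀ U, hU, Matrix.one_mul]
  rw [sum_sq_eq_trace_mul_transpose, sum_sq_eq_trace_mul_transpose, h, trace_mul_cycle, hU,
    Matrix.one_mul]

lemma transpose_mul_conj {V : Matrix n n ℝ} (hV : Vᵀ * V = 1) (D : Matrix n n ℝ) :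
    Vᵀ * (V * D * Vᵀ) * V = D := by
  rw [← Matrix.mul_assoc, ← Matrix.mul_assoc, hV, Matrix.one_mul, Matrix.mul_assoc, hV,
    Matrix.mul_one]

lemma IsHermitian.exists_orthogonal_diagonalization {A : Matrix n n ℝ} (hA : A.IsHermitian) :
    ∃ V : Matrix n n ℝ, Vᵀ * V = 1 ∧ V * Vᵀ = 1 ∧ A = V * diagonal hA.eigenvalues * Vᵀ := by
  refine ⟨hA.eigenvectorUnitary, ?_, ?_, ?_⟩
  · simpa [star_eq_conjTranspose] using Unitary.coe_star_mul_self hA.eigenvectorUnitary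
  · simpa [star_eq_conjTranspose] using Unitary.coe_mul_star_self hA.eigenvectorUnitary
  · conv_lhs => rw [hA.spectral_theorem]
    simp [star_eq_conjTranspose, RCLike.ofReal_real_eq_id]

lemma IsHermitian.sum_sq_eigenvalues {A : Matrix n n ℝ} (hA : A.IsHermitian) :
    ∑ i, hA.eigenvalues i ^ 2 = ∑ i, ∑ j, A i j ^ 2 := by
  obtain ⟨V, hV, -, hAV⟩ := hA.exists_orthogonal_diagonalization
  conv_rhs => rw [hAV, sum_sq_conj_of_transpose_mul_self hV]
  simp [diagonal_apply, ite_pow]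

lemma IsHermitian.exists_orthogonal_diagonalization_one_add {A : Matrix n n ℝ}
    (hA : A.IsHermitian) :
    ∃ V : Matrix n n ℝ, Vᵀ * V = 1 ∧ V * Vᵀ = 1 ∧
      Vᵀ * (1 + A) * V = diagonal (fun i => 1 + hA.eigenvalues i) := by
  obtain ⟨V, hV, hV', hAV⟩ := hA.exists_orthogonal_diagonalization
  refine ⟨V, hV, hV', ?_⟩
  conv_lhs => rw [hAV]
  rw [Matrix.mul_add, Matrix.add_mul, Matrix.mul_one, hV, transpose_mul_conj hV, ← diagonal_one,
    diagonal_add]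

lemma IsHermitian.det_one_add {A : Matrix n n ℝ} (hA : A.IsHermitian) :
    (1 + A).det = ∏ i, (1 + hA.eigenvalues i) := by
  obtain ⟨V, hV, hV', hconj⟩ := hA.exists_orthogonal_diagonalization_one_add
  rw [← det_diagonal, ← hconj, det_conj_of_mul_eq_one hV hV']

lemma IsHermitian.one_add_eigenvalues_pos {A : Matrix n n ℝ} (hA : A.IsHermitian)
    (h : (1 + A).PosDef) (i : n) : 0 < 1 + hA.eigenvalues i := by
  obtain ⟨V, hV, hV', hconj⟩ := hA.exists_orthogonal_diagonalization_one_add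
  have hunit : IsUnit V := isUnit_iff_exists.2 ⟨Vᵀ, hV', hV⟩
  have := (IsUnit.posDef_star_left_conjugate_iff hunit).2 h
  rw [star_eq_conjTranspose, conjTranspose_eq_transpose_of_trivial, hconj] at this
  exact posDef_diagonal_iff.1 this i

lemma PosDef.exists_whitening {K : Matrix n n ℝ} {L : ℝ} (hK : K.PosDef)
    (hKL : ∀ i, 1 / L ≤ hK.isHermitian.eigenvalues i ∧ hK.isHermitian.eigenvalues i ≤ L) :
    ∃ B : Matrix n n ℝ, B * K * Bᵀ = 1 ∧ ∀ Δ : Matrix n n ℝ,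
      ∑ i, ∑ j, Δ i j ^ 2 ≤ L ^ 2 * ∑ i, ∑ j, (B * Δ * Bᵀ) i j ^ 2 ∧
      ∑ i, ∑ j, (B * Δ * Bᵀ) i j ^ 2 ≤ L ^ 2 * ∑ i, ∑ j, Δ i j ^ 2 := by
  obtain ⟨V, hV, hV', hKV⟩ := hK.isHermitian.exists_orthogonal_diagonalization
  set e := hK.isHermitian.eigenvalues
  set w : n → ℝ := fun i => (√(e i))⁻¹
  have hconj : ∀ X, diagonal w * Vᵀ * X * (diagonal w * Vᵀ)ᵀ =
      diagonal w * (Vᵀ * X * V) * diagonal w := fun X => by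
    simp only [transpose_mul, transpose_transpose, diagonal_transpose, Matrix.mul_assoc]
  have hw2 : ∀ i, w i ^ 2 = (e i)⁻¹ := fun i => by
    rw [inv_pow, Real.sq_sqrt (hK.eigenvalues_pos i).le]
  have hw : ∀ i, 1 ≤ L * w i ^ 2 ∧ w i ^ 2 ≤ L := fun i => by
    have he := hK.eigenvalues_pos i
    have hL : 0 < L := he.trans_le (hKL i).2
    rw [hw2]
    constructor
    · rw [le_mul_inv_iff₀ he, one_mul]; exact (hKL i).2
    · rw [inv_le_iff_one_le_mul₀' he]
      have := (hKL i).1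
      rw [div_le_iff₀ hL] at this
      linarith
  refine ⟨diagonal w * Vᵀ, ?_, fun Δ => ?_⟩
  · rw [hconj, hKV, transpose_mul_conj hV, diagonal_mul_diagonal, diagonal_mul_diagonal,
      ← diagonal_one]
    congr 1
    funext i
    rw [mul_right_comm, ← sq, hw2, inv_mul_cancel₀ (hK.eigenvalues_pos i).ne']
  · rw [hconj, ← sum_sq_conj_of_transpose_mul_self (U := Vᵀ) (by rwa [transpose_transpose]) Δ,
      transpose_transpose]
    simp only [diagonal_mul, mul_diagonal, mul_sum]
    constructor <;> gcongr with i _ j _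
    · have := one_le_mul_of_one_le_of_one_le (hw i).1 (hw j).1
      nlinarith [sq_nonneg ((Vᵀ * Δ * V) i j)]
    · have := mul_le_mul (hw i).2 (hw j).2 (sq_nonneg _) ((sq_nonneg _).trans (hw i).2)
      nlinarith [sq_nonneg ((Vᵀ * Δ * V) i j)]

lemma exists_eigenvalues_of_mul_mul_transpose_eq_one {K Θ B : Matrix n n ℝ} (hK : K.IsHermitian)
    (hΘ : Θ.PosDef) (hB : B * K * Bᵀ = 1) :
    ∃ m : n → ℝ, (∀ i, 0 < 1 + m i) ∧ (K⁻¹ * (Θ - K)).trace = ∑ i, m i ∧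
      Θ.det = K.det * ∏ i, (1 + m i) ∧
      ∑ i, m i ^ 2 = ∑ i, ∑ j, (B * (Θ - K) * Bᵀ) i j ^ 2 := by
  have hN : (B * (Θ - K) * Bᵀ).IsHermitian := by
    simpa [conjTranspose_eq_transpose_of_trivial] using
      isHermitian_mul_mul_conjTranspose B (hΘ.isHermitian.sub hK)
  have hΘN : B * Θ * Bᵀ = 1 + B * (Θ - K) * Bᵀ := by
    rw [← hB, ← Matrix.add_mul, ← Matrix.mul_add, add_sub_cancel]
  have hB' : B * (K * Bᵀ) = 1 := by rw [← Matrix.mul_assoc, hB]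
  have hBunit : IsUnit B := (isUnit_iff_isUnit_det B).2 (isUnit_det_of_right_inverse hB')
  have hKinv : K⁻¹ = Bᵀ * B :=
    inv_eq_right_inv (by rw [← Matrix.mul_assoc, mul_eq_one_comm.1 hB'])
  refine ⟨hN.eigenvalues, fun i => hN.one_add_eigenvalues_pos ?_ i, ?_, ?_, hN.sum_sq_eigenvalues⟩
  · rw [← hΘN]
    simpa [star_eq_conjTranspose, conjTranspose_eq_transpose_of_trivial] using
      (IsUnit.posDef_star_right_conjugate_iff hBunit).2 hΘ
  · rw [hKinv, ← trace_mul_cycle, hN.trace_eq_sum_eigenvalues]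
    simp
  · have h1 := congrArg det hΘN
    have h2 := congrArg det hB
    rw [hN.det_one_add, det_mul, det_mul, det_transpose] at h1
    rw [det_mul, det_mul, det_transpose, det_one] at h2
    linear_combination K.det * h1 - Θ.det * h2

lemma PosDef.exists_relative_eigenvalues {K Θ : Matrix n n ℝ} {L : ℝ} (hK : K.PosDef)
    (hKL : ∀ i, 1 / L ≤ hK.isHermitian.eigenvalues i ∧ hK.isHermitian.eigenvalues i ≤ L)
    (hΘ : Θ.PosDef) :
    ∃ m : n → ℝ, (∀ i, 0 < 1 + m i) ∧ (K⁻¹ * (Θ - K)).trace = ∑ i, m i ∧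
      Θ.det = K.det * ∏ i, (1 + m i) ∧
      ∑ i, ∑ j, (Θ - K) i j ^ 2 ≤ L ^ 2 * ∑ i, m i ^ 2 ∧
      ∀ i, m i ^ 2 ≤ L ^ 2 * ∑ i, ∑ j, (Θ - K) i j ^ 2 := by
  obtain ⟨B, hBK, hBfrob⟩ := hK.exists_whitening hKL
  obtain ⟨m, hm, htr, hdet, hmsq⟩ :=
    exists_eigenvalues_of_mul_mul_transpose_eq_one hK.isHermitian hΘ hBK
  refine ⟨m, hm, htr, hdet, hmsq ▸ (hBfrob (Θ - K)).1, fun i => ?_⟩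
  exact (single_le_sum (fun j _ => sq_nonneg (m j)) (mem_univ i)).trans
    (hmsq ▸ (hBfrob (Θ - K)).2)

end Matrix

section Norms

variable {p : ℕ}

lemma frobNorm_sq (A : Matrix (Fin p) (Fin p) ℝ) : frobNorm A ^ 2 = ∑ i, ∑ j, A i j ^ 2 :=
  Real.sq_sqrt (by positivity)

lemma frobNorm_nonneg (A : Matrix (Fin p) (Fin p) ℝ) : 0 ≤ frobNorm A :=
  Real.sqrt_nonneg _

lemma abs_apply_le_frobNorm (A : Matrix (Fin p) (Fin p) ℝ) (i j : Fin p) :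
    |A i j| ≤ frobNorm A :=
  Real.abs_le_sqrt <| (single_le_sum (fun j _ => sq_nonneg (A i j)) (mem_univ j)).trans
    (single_le_sum (f := fun i => ∑ j, A i j ^ 2) (fun _ _ => by positivity) (mem_univ i))

lemma abs_apply_le_supNorm (A : Matrix (Fin p) (Fin p) ℝ) (i j : Fin p) : |A i j| ≤ supNorm A :=
  (le_ciSup (f := fun j => |A i j|) (Set.finite_range _).bddAbove j).trans
    (le_ciSup (f := fun i => ⨆ j, |A i j|) (Set.finite_range _).bddAbove i)

lemma offL1_nonneg (A : Matrix (Fin p) (Fin p) ℝ) : 0 ≤ offL1 A :=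
  sum_nonneg fun i _ => sum_nonneg fun j _ => by split_ifs <;> positivity

lemma opNorm1_le_frobNorm_add_offL1 (A : Matrix (Fin p) (Fin p) ℝ) :
    opNorm1 A ≤ frobNorm A + offL1 A := by
  refine Real.iSup_le (fun j => ?_) (add_nonneg (frobNorm_nonneg A) (offL1_nonneg A))
  have hsplit : ∀ i, |A i j| = (if i = j then |A j j| else 0) + (if i = j then 0 else |A i j|) :=
    fun i => by split_ifs with h <;> simp [h]
  have hcol : ∑ i, (if i = j then 0 else |A i j|) ≤ offL1 A :=
    sum_le_sum fun i _ => single_le_sum (f := fun j => if i = j then 0 else |A i j|)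
      (fun _ _ => by split_ifs <;> positivity) (mem_univ j)
  rw [sum_congr rfl fun i _ => hsplit i, sum_add_distrib, Fintype.sum_ite_eq']
  linarith [abs_apply_le_frobNorm A j j]

noncomputable def offSupport (K : Matrix (Fin p) (Fin p) ℝ) : Finset (Fin p × Fin p) :=
  {ij | ij.1 ≠ ij.2 ∧ K ij.1 ij.2 ≠ 0}

lemma card_offSupport (K : Matrix (Fin p) (Fin p) ℝ) :
    (offSupport K).card = {ij : Fin p × Fin p | ij.1 ≠ ij.2 ∧ K ij.1 ij.2 ≠ 0}.ncard := by
  rw [← Set.ncard_coe_finset, offSupport, coe_filter]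
  simp

lemma sq_sum_abs_le_card_mul_frobNorm_sq (S : Finset (Fin p × Fin p))
    (B : Matrix (Fin p) (Fin p) ℝ) :
    (∑ ij ∈ S, |B ij.1 ij.2|) ^ 2 ≤ S.card * frobNorm B ^ 2 := by
  refine sq_sum_le_card_mul_sum_sq.trans (mul_le_mul_of_nonneg_left ?_ (Nat.cast_nonneg _))
  rw [frobNorm_sq, ← Fintype.sum_prod_type']
  simp only [sq_abs]
  exact sum_le_sum_of_subset_of_nonneg (subset_univ S) fun _ _ _ => sq_nonneg _

lemma offL1_sub_two_mul_sum_offSupport_le (K B : Matrix (Fin p) (Fin p) ℝ) :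
    offL1 B - 2 * ∑ ij ∈ offSupport K, |B ij.1 ij.2| ≤ offL1 (K + B) - offL1 K := by
  rw [offSupport, sum_filter, Fintype.sum_prod_type, offL1, offL1, offL1, mul_sum,
    ← sum_sub_distrib, ← sum_sub_distrib]
  refine sum_le_sum fun i _ => ?_
  rw [mul_sum, ← sum_sub_distrib, ← sum_sub_distrib]
  refine sum_le_sum fun j _ => ?_
  by_cases hij : i = j
  · simp [hij]
  by_cases hK : K i j = 0
  · simp [hij, hK]
  · simp only [hij, hK, if_false, ne_eq, not_false_eq_true, and_self, if_true, Matrix.add_apply]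
    have h := abs_sub (K i j + B i j) (B i j)
    rw [add_sub_cancel_right] at h
    linarith

lemma neg_mul_offL1_le_trace_mul {E Δ : Matrix (Fin p) (Fin p) ℝ} {c : ℝ}
    (hE : ∀ i, E i i = 0) (hc : supNorm E ≤ c) : -(c * offL1 Δ) ≤ (E * Δ).trace := by
  rw [trace_mul_comm, offL1, mul_sum, ← sum_neg_distrib]
  simp only [trace, Matrix.diag, mul_apply]
  refine sum_le_sum fun i _ => ?_
  rw [mul_sum, ← sum_neg_distrib]
  refine sum_le_sum fun j _ => ?_
  split_ifs with hij
  · simp [hij, hE]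
  · have hEc := (abs_apply_le_supNorm E j i).trans hc
    have := neg_abs_le (Δ i j * E j i)
    rw [abs_mul] at this
    nlinarith [abs_nonneg (Δ i j)]

end Norms

section Localization

variable {ι : Type*} [Fintype ι]

lemma sq_mul_sum_sq_le_mul_sum_sub_log {m : ι → ℝ} {t : ℝ} (hm : ∀ i, 0 < 1 + m i)
    (ht₀ : 0 ≤ t) (ht₁ : t ≤ 1) (hsmall : ∀ i, |t * m i| ≤ 1 / 2) :
    t ^ 2 / 8 * ∑ i, m i ^ 2 ≤ t * ∑ i, (m i - Real.log (1 + m i)) := by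
  rw [mul_sum, mul_sum]
  refine sum_le_sum fun i _ => ?_
  calc t ^ 2 / 8 * m i ^ 2 = (t * m i) ^ 2 / 8 := by ring
    _ ≤ t * m i - Real.log (1 + t * m i) := Real.sq_div_eight_le_sub_log_one_add (hsmall i)
    _ ≤ t * (m i - Real.log (1 + m i)) := Real.mul_sub_log_one_add_mul_le (hm i) ht₀ ht₁

lemma sq_le_of_forall_mul_sq_le {L d κ : ℝ} (hL : 0 < L) (hd : 0 ≤ d) (hκ : 4 * L ^ 2 * κ < 1)
    (H : ∀ t, 0 ≤ t → t ≤ 1 → 2 * t * L * d ≤ 1 → (t * d) ^ 2 ≤ κ) : d ^ 2 ≤ κ := by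
  by_cases hd1 : 2 * L * d ≤ 1
  · simpa using H 1 zero_le_one le_rfl (by linarith)
  · have hd1 := (not_le.1 hd1).le
    have hd0 : d ≠ 0 := by rintro rfl; linarith
    have h := H (2 * L * d)⁻¹ (by positivity) (inv_le_one_of_one_le₀ hd1) (le_of_eq (by field_simp))
    rw [show (2 * L * d)⁻¹ * d = (2 * L)⁻¹ by field_simp] at h
    have : 1 ≤ 4 * L ^ 2 * κ := by
      rw [inv_pow, inv_le_iff_one_le_mul₀ (by positivity)] at h
      linarith
    linarith

theorem sq_add_le_of_sum_sub_log_le {m : ι → ℝ} {L lam d q Q s : ℝ}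
    (hL : 1 ≤ L) (hlam : 0 ≤ lam) (hd : 0 ≤ d) (hq : 0 ≤ q) (hs : 0 ≤ s)
    (hm : ∀ i, 0 < 1 + m i) (hdm : d ^ 2 ≤ L ^ 2 * ∑ i, m i ^ 2)
    (hmd : ∀ i, m i ^ 2 ≤ L ^ 2 * d ^ 2)
    (hQd : Q ^ 2 ≤ s * d ^ 2) (hsmall : 1024 * L ^ 6 * s * lam ^ 2 < 1)
    (hbasic : ∑ i, (m i - Real.log (1 + m i)) + lam / 2 * q ≤ 2 * lam * Q) :
    d ^ 2 + 4 * L ^ 2 * lam * q ≤ 256 * L ^ 4 * s * lam ^ 2 := by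
  have hL0 : 0 < L := by linarith
  have growth : ∀ t, 0 ≤ t → t ≤ 1 → 2 * t * L * d ≤ 1 →
      (t * d) ^ 2 + 4 * L ^ 2 * lam * t * q ≤ 16 * L ^ 2 * lam * t * Q := by
    intro t ht₀ ht₁ htd
    have hsmall_t : ∀ i, |t * m i| ≤ 1 / 2 := fun i => by
      have htLd : (t * L * d) ^ 2 ≤ 1 / 4 := by nlinarith [mul_nonneg (mul_nonneg ht₀ hL0.le) hd]
      refine abs_le_of_sq_le_sq ?_ (by norm_num)
      nlinarith [mul_le_mul_of_nonneg_left (hmd i) (sq_nonneg t)]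
    -- `(t d)² ≤ L² t² ∑ mᵢ² ≤ 8 L² t ∑ (mᵢ - log (1 + mᵢ))`, then the basic inequality
    have h := sq_mul_sum_sq_le_mul_sum_sub_log hm ht₀ ht₁ hsmall_t
    have h1 := mul_le_mul_of_nonneg_left hdm (sq_nonneg t)
    have h2 := mul_le_mul_of_nonneg_left hbasic
      (mul_nonneg ht₀ (by positivity : (0 : ℝ) ≤ 8 * L ^ 2))
    nlinarith
  have hball : d ^ 2 ≤ 256 * L ^ 4 * s * lam ^ 2 := by
    refine sq_le_of_forall_mul_sq_le hL0 hd (by nlinarith) fun t ht₀ ht₁ htd => ?_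
    have h : (t * d) ^ 2 ≤ 16 * L ^ 2 * lam * (t * Q) := by
      have := growth t ht₀ ht₁ htd
      have : 0 ≤ 4 * L ^ 2 * lam * t * q := by positivity
      linarith
    -- square `h` and use `Q² ≤ s d²`, then cancel `(t d)²`
    rcases (sq_nonneg (t * d)).eq_or_lt with h0 | hpos
    · rw [← h0]; positivity
    · have hsq := pow_le_pow_left₀ (sq_nonneg _) h 2
      have hQt := mul_le_mul_of_nonneg_left hQd
        (by positivity : (0 : ℝ) ≤ 256 * L ^ 4 * lam ^ 2 * t ^ 2)
      nlinarith
  have hLd : 2 * L * d ≤ 1 := by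
    refine abs_le_of_sq_le_sq' ?_ zero_le_one |>.2
    nlinarith
  have hfin := growth 1 zero_le_one le_rfl (by linarith)
  have hQ : 16 * L ^ 2 * lam * Q ≤ 256 * L ^ 4 * s * lam ^ 2 := by
    refine (le_abs_self _).trans (abs_le_of_sq_le_sq ?_ (by positivity))
    have h1 := mul_le_mul_of_nonneg_left hQd (by positivity : (0 : ℝ) ≤ 256 * L ^ 4 * lam ^ 2)
    have h2 := mul_le_mul_of_nonneg_left hball
      (mul_nonneg hs (by positivity : (0 : ℝ) ≤ 256 * L ^ 4 * lam ^ 2))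
    nlinarith
  linarith

end Localization

lemma glassoObj_basic_inequality {p : ℕ} {R₀ Rhat K Θ : Matrix (Fin p) (Fin p) ℝ}
    {lam lam0 : ℝ} {m : Fin p → ℝ} (hmin : glassoObj Rhat lam Θ ≤ glassoObj Rhat lam K)
    (hdiag : ∀ i, Rhat i i = R₀ i i) (hclose : supNorm (Rhat - R₀) ≤ lam0) (hlam0 : 0 ≤ lam0)
    (hlam : 2 * lam0 ≤ lam) (hK : 0 < K.det) (hm : ∀ i, 0 < 1 + m i)
    (htr : (R₀ * (Θ - K)).trace = ∑ i, m i) (hdet : Θ.det = K.det * ∏ i, (1 + m i)) :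
    ∑ i, (m i - Real.log (1 + m i)) + lam / 2 * offL1 (Θ - K) ≤
      2 * lam * ∑ ij ∈ offSupport K, |(Θ - K) ij.1 ij.2| := by
  have hlogdet : Real.log Θ.det = Real.log K.det + ∑ i, Real.log (1 + m i) := by
    rw [hdet, Real.log_mul hK.ne' (prod_pos fun i _ => hm i).ne',
      Real.log_prod fun i _ => (hm i).ne']
  have htrace : (Rhat * Θ).trace - (Rhat * K).trace =
      ∑ i, m i + ((Rhat - R₀) * (Θ - K)).trace := by
    rw [← htr, ← trace_add, ← Matrix.add_mul, ← trace_sub, ← Matrix.mul_sub, add_sub_cancel]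
  have hnoise := neg_mul_offL1_le_trace_mul (Δ := Θ - K) (fun i => by simp [hdiag]) hclose
  have hpen := offL1_sub_two_mul_sum_offSupport_le K (Θ - K)
  rw [add_sub_cancel] at hpen
  have hlam' : 0 ≤ lam := by linarith
  have h1 := mul_le_mul_of_nonneg_left hpen hlam'
  have h2 := mul_le_mul_of_nonneg_right (by linarith : lam0 ≤ lam / 2) (offL1_nonneg (Θ - K))
  unfold glassoObj at hmin
  rw [sum_sub_distrib]
  linarith

lemma oracle_bounds_of_sq_add_le {p : ℕ} {Δ : Matrix (Fin p) (Fin p) ℝ} {L lam : ℝ} {s : ℕ}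
    (hL : 1 ≤ L) (hlam : 0 < lam)
    (h : frobNorm Δ ^ 2 + 4 * L ^ 2 * lam * offL1 Δ ≤ 256 * L ^ 4 * s * lam ^ 2) :
    frobNorm Δ ^ 2 + lam * offL1 Δ ≤ 8 * (8 * L ^ 2) ^ 2 * s * lam ^ 2 ∧
    opNorm1 Δ ≤ 8 * (8 * L ^ 2) * s * lam ^ 2 + 8 * (8 * L ^ 2) ^ 2 * s * lam := by
  have hq := offL1_nonneg Δ
  have hs2 : (s : ℝ) ≤ (s : ℝ) ^ 2 := by exact_mod_cast Nat.le_self_pow two_ne_zero s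
  have hL2 : 1 ≤ L ^ 2 := by nlinarith
  have hsl : 0 ≤ L ^ 2 * s * lam := by positivity
  have hq' : 0 ≤ 4 * L ^ 2 * lam * offL1 Δ := by positivity
  constructor
  · nlinarith [mul_nonneg (by linarith : (0 : ℝ) ≤ 4 * L ^ 2 - 1) (mul_nonneg hlam.le hq),
      mul_nonneg (by positivity : (0 : ℝ) ≤ L ^ 4 * lam ^ 2) (s.cast_nonneg : (0 : ℝ) ≤ s)]
  · have hdle : frobNorm Δ ≤ 16 * L ^ 2 * s * lam := by
      refine abs_le_of_sq_le_sq' ?_ (by positivity) |>.2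
      have hs' := mul_le_mul_of_nonneg_left hs2 (by positivity : (0 : ℝ) ≤ 256 * L ^ 4 * lam ^ 2)
      linarith
    have hqle : offL1 Δ ≤ 64 * L ^ 2 * s * lam :=
      le_of_mul_le_mul_left (a := 4 * L ^ 2 * lam) (by nlinarith) (by positivity)
    calc opNorm1 Δ ≤ frobNorm Δ + offL1 Δ := opNorm1_le_frobNorm_add_offL1 Δ
      _ ≤ 8 * (8 * L ^ 2) * s * lam ^ 2 + 8 * (8 * L ^ 2) ^ 2 * s * lam := by
        nlinarith [mul_nonneg (by nlinarith : (0 : ℝ) ≤ 512 * L ^ 2 - 80) hsl,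
          mul_nonneg hsl hlam.le]

theorem stmt1_general {p : ℕ} (L lam lam0 : ℝ) (hL : 1 ≤ L)
    (R₀ Rhat Θnorm : Matrix (Fin p) (Fin p) ℝ)
    (hR₀pd : R₀.PosDef) (hR₀diag : ∀ i, R₀ i i = 1)
    (K₀ : Matrix (Fin p) (Fin p) ℝ) (hK₀ : K₀ = R₀⁻¹)
    (hK₀pd : K₀.PosDef)
    (heig : ∀ i, 1 / L ≤ hK₀pd.isHermitian.eigenvalues i ∧
      hK₀pd.isHermitian.eigenvalues i ≤ L)
    (hRhatdiag : ∀ i, Rhat i i = 1)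
    (hlam0 : 0 < lam0)
    (hclose : supNorm (Rhat - R₀) ≤ lam0)
    (s : ℕ) (hs : s = {ij : Fin p × Fin p | ij.1 ≠ ij.2 ∧ K₀ ij.1 ij.2 ≠ 0}.ncard)
    (cL : ℝ) (hcL : cL = 8 * L ^ 2)
    (hlam1 : 2 * lam0 ≤ lam) (hlam2 : lam ≤ 1 / (8 * L ^ 2))
    (hlam3 : 8 * cL ^ 2 * s * lam ^ 2 ≤ lam0 / (2 * L))
    (hΘpd : Θnorm.PosDef)
    (hmin : ∀ Θ : Matrix (Fin p) (Fin p) ℝ, Θ.PosDef →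
      glassoObj Rhat lam Θnorm ≤ glassoObj Rhat lam Θ) :
    frobNorm (Θnorm - K₀) ^ 2 + lam * offL1 (Θnorm - K₀) ≤ 8 * cL ^ 2 * s * lam ^ 2 ∧
    opNorm1 (Θnorm - K₀) ≤ 8 * cL * s * lam ^ 2 + 8 * cL ^ 2 * s * lam := by
  have hlam : 0 < lam := by linarith
  have hR₀ : K₀⁻¹ = R₀ := by rw [hK₀, nonsing_inv_nonsing_inv _ hR₀pd.det_pos.ne'.isUnit]
  obtain ⟨m, hm, htr, hdet, hdm, hmd⟩ := hK₀pd.exists_relative_eigenvalues heig hΘpd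
  rw [hR₀] at htr
  rw [← frobNorm_sq] at hdm hmd
  have hbasic := glassoObj_basic_inequality (hmin K₀ hK₀pd)
    (fun i => by rw [hRhatdiag, hR₀diag]) hclose hlam0.le hlam1 hK₀pd.det_pos hm htr hdet
  have hQ := sq_sum_abs_le_card_mul_frobNorm_sq (offSupport K₀) (Θnorm - K₀)
  rw [card_offSupport, ← hs] at hQ
  have hsmall : 1024 * L ^ 6 * s * lam ^ 2 < 1 := by
    rw [hcL, le_div_iff₀ (by positivity)] at hlam3
    rw [le_div_iff₀ (by positivity)] at hlam2
    nlinarith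
  subst hcL
  exact oracle_bounds_of_sq_add_le hL hlam <| sq_add_le_of_sum_sub_log_le hL hlam.le
    (frobNorm_nonneg _) (offL1_nonneg _) s.cast_nonneg hm hdm hmd hQ hsmall hbasic

/-- oracle inequality for the normalized graphical Lasso, regime `p ≫ n`.
`R₀` is the true correlation matrix (unit diagonal) with inverse `K₀ := R₀⁻¹` having
eigenvalues in `[1/L, L]`; `Rhat` is `R̂` (unit diagonal, `‖R̂ − R₀‖_∞ ≤ λ₀`);
`Θnorm` is the normalized graphical Lasso estimator `Θ̂_norm`;
`s` is the number of nonzero off-diagonal entries of `K₀`, and `cL = 8L²`. -/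
theorem stmt1 {p : ℕ} (hp : 1 ≤ p) (L lam lam0 : ℝ) (hL : 1 ≤ L)
    (R₀ Rhat Θnorm : Matrix (Fin p) (Fin p) ℝ)
    (hR₀pd : R₀.PosDef) (hR₀diag : ∀ i, R₀ i i = 1)
    (K₀ : Matrix (Fin p) (Fin p) ℝ) (hK₀ : K₀ = R₀⁻¹)
    (hK₀pd : K₀.PosDef)
    (heig : ∀ i, 1 / L ≤ hK₀pd.isHermitian.eigenvalues i ∧
      hK₀pd.isHermitian.eigenvalues i ≤ L)
    (hRhat : Rhat.IsHermitian) (hRhatdiag : ∀ i, Rhat i i = 1)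
    (hlam0 : 0 < lam0)
    (hclose : supNorm (Rhat - R₀) ≤ lam0)
    (s : ℕ) (hs : s = {ij : Fin p × Fin p | ij.1 ≠ ij.2 ∧ K₀ ij.1 ij.2 ≠ 0}.ncard)
    (cL : ℝ) (hcL : cL = 8 * L ^ 2)
    (hlam1 : 2 * lam0 ≤ lam) (hlam2 : lam ≤ 1 / (8 * L ^ 2))
    (hlam3 : 8 * cL ^ 2 * s * lam ^ 2 ≤ lam0 / (2 * L))
    (hΘpd : Θnorm.PosDef)
    (hmin : ∀ Θ : Matrix (Fin p) (Fin p) ℝ, Θ.PosDef →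
      glassoObj Rhat lam Θnorm ≤ glassoObj Rhat lam Θ) :
    frobNorm (Θnorm - K₀) ^ 2 + lam * offL1 (Θnorm - K₀) ≤ 8 * cL ^ 2 * s * lam ^ 2 ∧
    opNorm1 (Θnorm - K₀) ≤ 8 * cL * s * lam ^ 2 + 8 * cL ^ 2 * s * lam :=
  stmt1_general L lam lam0 hL R₀ Rhat Θnorm hR₀pd hR₀diag K₀ hK₀ hK₀pd heig hRhatdiag hlam0 hclose s
    hs cL hcL hlam1 hlam2 hlam3 hΘpd hmin
end

section
/- Let L ≥ 1 and let Θ₀ be a p×p real symmetric positive definite matrix with 1/L ≤ λ_min(Θ₀) ≤ λ_max(Θ₀) ≤ L, and set Σ₀ := Θ₀⁻¹. Let Δ be a p×p real symmetric matrix with ‖Δ‖_F ≤ 1/(2L). Then Θ₀ + Δ is positive definite (in fact λ_min(Θ₀ + Δ) ≥ 1/(2L)), so that E(Δ) := trace(ΔΣ₀) − [log det(Δ + Θ₀) − log det(Θ₀)] is well defined, and E(Δ) ≥ ‖Δ‖_F² / (2(L + 1/(2L))²). -/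
/-!
Along the segment `S t = Θ₀ + t • Δ`, `t ∈ [0, 1]`, the Frobenius bound keeps the spectrum of
`S t` inside `[1/(2L), M]` with `M = L + 1/(2L)`. Write `g t = log det (S t)`. Concavity of
`log det` (`log det Y - log det X ≤ tr (Y X⁻¹) - p`, from `log x ≤ x - 1` on eigenvalues) gives
`g t - g s ≤ (t - s) tr (Δ (S s)⁻¹)`, and the resolvent identity gives
`tr (Δ Θ₀⁻¹) - tr (Δ (S s)⁻¹) = s tr (Δ Θ₀⁻¹ Δ (S s)⁻¹) ≥ s ‖Δ‖_F² / M²`. Hence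
`φ t = t tr (Δ Θ₀⁻¹) - g t - ‖Δ‖_F² t² / (2M²)` has increments
`φ t - φ s ≥ -‖Δ‖_F² (t - s)² / (2M²)`, which on an interval forces `φ 0 ≤ φ 1`: this is the
claimed bound.
-/

open Matrix

open Set
open scoped MatrixOrder ComplexOrder

theorem le_of_forall_neg_mul_sq_le_sub {f : ℝ → ℝ} {a b C : ℝ} (hab : a ≤ b)
    (h : ∀ s ∈ Icc a b, ∀ t ∈ Icc a b, s ≤ t → -(C * (t - s) ^ 2) ≤ f t - f s) :
    f a ≤ f b := by
  have hN : ∀ N : ℕ, 0 < N → f a - f b ≤ C * (b - a) ^ 2 / N := by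
    intro N hN
    have hN' : (0 : ℝ) < N := Nat.cast_pos.mpr hN
    set δ := (b - a) / N with hδ
    have hδ0 : 0 ≤ δ := div_nonneg (sub_nonneg.mpr hab) hN'.le
    have hNδ : a + N * δ = b := by rw [hδ]; field_simp; ring
    have hx : ∀ k ≤ N, a + k * δ ∈ Icc a b := by
      intro k hk
      refine ⟨le_add_of_nonneg_right (by positivity), hNδ ▸ ?_⟩
      gcongr
    have hstep : ∀ k ∈ Finset.range N,
        -(C * δ ^ 2) ≤ f (a + (k + 1 : ℕ) * δ) - f (a + k * δ) := by
      intro k hk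
      have hk := Finset.mem_range.mp hk
      have := h _ (hx k hk.le) _ (hx (k + 1) hk) (by push_cast; linarith)
      push_cast at this ⊢
      convert this using 3
      ring
    have := Finset.sum_le_sum hstep
    rw [Finset.sum_range_sub (fun k => f (a + k * δ)), Finset.sum_const, Finset.card_range] at this
    simp only [Nat.cast_zero, zero_mul, add_zero, hNδ, nsmul_eq_mul] at this
    rw [hδ] at this
    field_simp at this ⊢
    linarith
  exact sub_nonpos.mp <| ge_of_tendsto (tendsto_const_div_atTop_nhds_zero_nat _)
    (Filter.eventually_atTop.mpr ⟨1, hN⟩)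

namespace Matrix

variable {n : Type*} [DecidableEq n]

theorem smul_one_le_smul_one {c d : ℝ} (h : c ≤ d) : c • (1 : Matrix n n ℝ) ≤ d • 1 := by
  rw [le_iff, ← sub_smul]
  exact PosSemidef.one.smul (sub_nonneg.mpr h)

theorem PosDef.of_smul_one_le {A : Matrix n n ℝ} {c : ℝ} (hc : 0 < c) (h : c • 1 ≤ A) :
    A.PosDef := by
  simpa using PosDef.posSemidef_add (le_iff.mp h) (PosDef.one.smul hc)

variable [Fintype n]

theorem add_smul_mem_Icc {A Δ : Matrix n n ℝ} {a b e t : ℝ} (hA : A ∈ Icc (a • 1) (b • 1))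
    (hΔ : Δ ∈ Icc ((-e) • 1) (e • 1)) (he : 0 ≤ e) (ht : t ∈ Icc (0 : ℝ) 1) :
    A + t • Δ ∈ Icc ((a - e) • 1) ((b + e) • 1) := by
  have hte : t * e ≤ e := mul_le_of_le_one_left he ht.2
  have hlo : (-e) • 1 ≤ t • Δ := calc
    (-e) • 1 ≤ (t * -e) • (1 : Matrix n n ℝ) := smul_one_le_smul_one (by linarith)
    _ = t • ((-e) • 1) := (smul_smul t (-e) 1).symm
    _ ≤ t • Δ := smul_le_smul_of_nonneg_left hΔ.1 ht.1
  have hhi : t • Δ ≤ e • 1 := calc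
    t • Δ ≤ t • (e • 1) := smul_le_smul_of_nonneg_left hΔ.2 ht.1
    _ = (t * e) • (1 : Matrix n n ℝ) := smul_smul t e 1
    _ ≤ e • 1 := smul_one_le_smul_one hte
  rw [sub_eq_add_neg, add_smul, add_smul]
  exact ⟨add_le_add hA.1 hlo, add_le_add hA.2 hhi⟩

theorem IsHermitian.smul_one_le_iff {A : Matrix n n ℝ} (hA : A.IsHermitian) {c : ℝ} :
    c • 1 ≤ A ↔ ∀ i, c ≤ hA.eigenvalues i := by
  rw [← Algebra.algebraMap_eq_smul_one, algebraMap_le_iff_le_spectrum (a := A) hA.isSelfAdjoint,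
    hA.spectrum_real_eq_range_eigenvalues, Set.forall_mem_range]

theorem IsHermitian.le_smul_one_iff {A : Matrix n n ℝ} (hA : A.IsHermitian) {c : ℝ} :
    A ≤ c • 1 ↔ ∀ i, hA.eigenvalues i ≤ c := by
  rw [← Algebra.algebraMap_eq_smul_one, le_algebraMap_iff_spectrum_le (a := A) hA.isSelfAdjoint,
    hA.spectrum_real_eq_range_eigenvalues, Set.forall_mem_range]

theorem PosDef.inv_smul_one_le_inv {A : Matrix n n ℝ} (hA : A.PosDef) {c : ℝ} (h : A ≤ c • 1) :
    c⁻¹ • 1 ≤ A⁻¹ := by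
  rw [← Algebra.algebraMap_eq_smul_one,
    algebraMap_le_iff_le_spectrum (a := A⁻¹) hA.inv.isHermitian.isSelfAdjoint]
  intro x hx
  have hxA : x⁻¹ ∈ spectrum ℝ A := by
    have hinv : A⁻¹ = ↑(hA.isUnit.unit⁻¹) := by rw [coe_units_inv, hA.isUnit.unit_spec]
    rw [hinv] at hx
    simpa using spectrum.inv₀_mem_iff.mpr hx
  rw [hA.isHermitian.spectrum_real_eq_range_eigenvalues] at hxA
  obtain ⟨i, hi⟩ := hxA
  have hpos : 0 < x⁻¹ := hi ▸ hA.eigenvalues_pos i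
  have hle : x⁻¹ ≤ c := hi ▸ hA.isHermitian.le_smul_one_iff.mp h i
  simpa using inv_anti₀ hpos hle

theorem PosSemidef.trace_mul_nonneg {𝕜 : Type*} [RCLike 𝕜] {A B : Matrix n n 𝕜}
    (hA : A.PosSemidef) (hB : B.PosSemidef) : 0 ≤ (A * B).trace := by
  obtain ⟨C, rfl⟩ := CStarAlgebra.nonneg_iff_eq_star_mul_self.mp hB.nonneg
  rw [← Matrix.mul_assoc, trace_mul_comm, ← Matrix.mul_assoc, star_eq_conjTranspose]
  exact (hA.mul_mul_conjTranspose_same C).trace_nonneg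

theorem PosSemidef.trace_mul_le_trace_mul {𝕜 : Type*} [RCLike 𝕜] {C A B : Matrix n n 𝕜}
    (hC : C.PosSemidef) (hAB : A ≤ B) : (C * A).trace ≤ (C * B).trace := by
  rw [← sub_nonneg, ← trace_sub, ← Matrix.mul_sub]
  exact hC.trace_mul_nonneg hAB

theorem IsHermitian.mul_mul_trace_mul_self_le {Δ A B : Matrix n n ℝ} (hΔ : Δ.IsHermitian)
    {a b : ℝ} (ha : 0 ≤ a) (hb : 0 ≤ b) (hA : a • 1 ≤ A) (hB : b • 1 ≤ B) :
    a * b * (Δ * Δ).trace ≤ (Δ * A * Δ * B).trace := by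
  have hΔΔ : (Δ * Δ).PosSemidef := by
    simpa only [hΔ.eq] using posSemidef_conjTranspose_mul_self Δ
  have hΔAΔ : (Δ * A * Δ).PosSemidef := by
    have hApsd : A.PosSemidef := by simpa using (le_iff.mp hA).add (PosSemidef.one.smul ha)
    simpa only [hΔ.eq] using hApsd.conjTranspose_mul_mul_same Δ
  calc a * b * (Δ * Δ).trace = b * (Δ * Δ * (a • 1)).trace := by
        simp only [Matrix.mul_smul, Matrix.mul_one, trace_smul, smul_eq_mul]; ring
    _ ≤ b * (Δ * Δ * A).trace := by gcongr; exact hΔΔ.trace_mul_le_trace_mul hA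
    _ = (Δ * A * Δ * (b • 1)).trace := by
        rw [Matrix.mul_smul, Matrix.mul_one, trace_smul, smul_eq_mul, trace_mul_comm (Δ * A),
          ← Matrix.mul_assoc]
    _ ≤ (Δ * A * Δ * B).trace := hΔAΔ.trace_mul_le_trace_mul hB

theorem PosDef.log_det_le_trace_sub_card {W : Matrix n n ℝ} (hW : W.PosDef) :
    Real.log W.det ≤ W.trace - Fintype.card n := by
  rw [hW.isHermitian.det_eq_prod_eigenvalues, hW.isHermitian.trace_eq_sum_eigenvalues]
  simp only [RCLike.ofReal_real_eq_id, id]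
  rw [Real.log_prod fun i _ => (hW.eigenvalues_pos i).ne', ← Finset.card_univ,
    Finset.cast_card, ← Finset.sum_sub_distrib]
  exact Finset.sum_le_sum fun i _ => Real.log_le_sub_one_of_pos (hW.eigenvalues_pos i)

theorem PosDef.log_det_sub_log_det_le {X Y : Matrix n n ℝ} (hX : X.PosDef) (hY : Y.PosDef) :
    Real.log Y.det - Real.log X.det ≤ (Y * X⁻¹).trace - Fintype.card n := by
  -- congruence by `B` reduces the claim to `log det W ≤ tr W - card n`
  obtain ⟨B, rfl⟩ := CStarAlgebra.nonneg_iff_eq_star_mul_self.mp hX.posSemidef.nonneg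
  rw [star_eq_conjTranspose] at hX ⊢
  have hdetX : Bᴴ.det * B.det ≠ 0 := det_mul Bᴴ B ▸ hX.det_pos.ne'
  have hB : IsUnit B.det := (right_ne_zero_of_mul hdetX).isUnit
  have hBH : IsUnit Bᴴ.det := (left_ne_zero_of_mul hdetX).isUnit
  obtain ⟨W, hW, rfl⟩ : ∃ W : Matrix n n ℝ, W.PosDef ∧ Y = Bᴴ * W * B := by
    refine ⟨(B⁻¹)ᴴ * Y * B⁻¹, hY.conjTranspose_mul_mul_same (mulVec_injective_iff_isUnit.mpr
      (isUnit_nonsing_inv_iff.mpr ((isUnit_iff_isUnit_det B).mpr hB))), ?_⟩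
    rw [conjTranspose_nonsing_inv, Matrix.mul_assoc, nonsing_inv_mul_cancel_right (h := hB),
      mul_nonsing_inv_cancel_left (h := hBH)]
  have hdet : (Bᴴ * W * B).det = W.det * (Bᴴ * B).det := by
    simp only [det_mul]; ring
  have htr : (Bᴴ * W * B * (Bᴴ * B)⁻¹).trace = W.trace := by
    rw [mul_inv_rev, ← Matrix.mul_assoc, mul_nonsing_inv_cancel_right (h := hB), trace_mul_comm,
      nonsing_inv_mul_cancel_left (h := hBH)]
  rw [hdet, Real.log_mul hW.det_pos.ne' hX.det_pos.ne', htr]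
  linarith [hW.log_det_le_trace_sub_card]

theorem PosDef.log_det_add_smul_sub_le {A Δ : Matrix n n ℝ} {s t : ℝ} (hs : (A + s • Δ).PosDef)
    (ht : (A + t • Δ).PosDef) :
    Real.log (A + t • Δ).det - Real.log (A + s • Δ).det ≤ (t - s) * (Δ * (A + s • Δ)⁻¹).trace := by
  have htr : ((A + t • Δ) * (A + s • Δ)⁻¹).trace
      = Fintype.card n + (t - s) * (Δ * (A + s • Δ)⁻¹).trace := by
    rw [show A + t • Δ = A + s • Δ + (t - s) • Δ by rw [sub_smul]; abel, Matrix.add_mul,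
      mul_nonsing_inv _ hs.det_pos.ne'.isUnit, trace_add, trace_one, Matrix.smul_mul, trace_smul,
      smul_eq_mul]
  linarith [hs.log_det_sub_log_det_le ht]

theorem trace_mul_inv_sub_trace_mul_inv_add_smul {A Δ : Matrix n n ℝ} {s : ℝ} (hA : IsUnit A)
    (hs : IsUnit (A + s • Δ)) :
    (Δ * A⁻¹).trace - (Δ * (A + s • Δ)⁻¹).trace = s * (Δ * A⁻¹ * Δ * (A + s • Δ)⁻¹).trace := by
  rw [← trace_sub, ← Matrix.mul_sub, inv_sub_inv (iff_of_true hA hs), add_sub_cancel_left,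
    Matrix.mul_smul, Matrix.smul_mul, Matrix.mul_smul, trace_smul, smul_eq_mul]
  simp only [Matrix.mul_assoc]

theorem IsHermitian.trace_mul_self_div_le_trace_mul_inv_sub_log_det {A Δ : Matrix n n ℝ}
    (hΔ : Δ.IsHermitian) {C : ℝ} (hC : 0 < C)
    (hpath : ∀ t ∈ Icc (0 : ℝ) 1, (A + t • Δ).PosDef ∧ A + t • Δ ≤ C • 1) :
    (Δ * Δ).trace / (2 * C ^ 2) ≤
      (Δ * A⁻¹).trace - (Real.log (A + Δ).det - Real.log A.det) := by
  set K := (Δ * Δ).trace / C ^ 2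
  obtain ⟨hA, hAC⟩ : A.PosDef ∧ A ≤ C • 1 := by simpa using hpath 0 ⟨le_rfl, zero_le_one⟩
  have hdecay : ∀ s ∈ Icc (0 : ℝ) 1,
      K * s ≤ (Δ * A⁻¹).trace - (Δ * (A + s • Δ)⁻¹).trace := by
    intro s hs
    obtain ⟨hS, hSC⟩ := hpath s hs
    rw [trace_mul_inv_sub_trace_mul_inv_add_smul hA.isUnit hS.isUnit]
    have := hΔ.mul_mul_trace_mul_self_le (inv_nonneg.mpr hC.le) (inv_nonneg.mpr hC.le)
      (hA.inv_smul_one_le_inv hAC) (hS.inv_smul_one_le_inv hSC)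
    have hK : K = C⁻¹ * C⁻¹ * (Δ * Δ).trace := by simp only [K]; ring
    rw [hK, mul_comm]
    exact mul_le_mul_of_nonneg_left this hs.1
  have := le_of_forall_neg_mul_sq_le_sub (C := K / 2) zero_le_one
    (f := fun t => t * (Δ * A⁻¹).trace - Real.log (A + t • Δ).det - K / 2 * t ^ 2) ?_
  · have hK : (Δ * Δ).trace / (2 * C ^ 2) = K / 2 := by simp only [K]; ring
    simp only [zero_mul, zero_smul, add_zero, one_smul, one_mul] at this
    linarith
  · intro s hs t ht hst
    have h1 := PosDef.log_det_add_smul_sub_le (hpath s hs).1 (hpath t ht).1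
    have h2 := mul_le_mul_of_nonneg_left (hdecay s hs) (sub_nonneg.mpr hst)
    linarith

end Matrix

theorem dotProduct_mulVec_le_frobNorm_mul {p : ℕ} (Δ : Matrix (Fin p) (Fin p) ℝ)
    (x : Fin p → ℝ) : x ⬝ᵥ (Δ *ᵥ x) ≤ frobNorm Δ * (x ⬝ᵥ x) := by
  have hxx : x ⬝ᵥ x = ∑ i, x i ^ 2 := by simp [dotProduct, sq]
  calc x ⬝ᵥ (Δ *ᵥ x) = ∑ ij : Fin p × Fin p, Δ ij.1 ij.2 * (x ij.1 * x ij.2) := by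
        simp only [dotProduct, mulVec, Fintype.sum_prod_type, Finset.mul_sum]
        exact Finset.sum_congr rfl fun i _ => Finset.sum_congr rfl fun j _ => by ring
    _ ≤ √(∑ ij : Fin p × Fin p, Δ ij.1 ij.2 ^ 2) *
          √(∑ ij : Fin p × Fin p, (x ij.1 * x ij.2) ^ 2) :=
        Real.sum_mul_le_sqrt_mul_sqrt _ _ _
    _ = frobNorm Δ * (x ⬝ᵥ x) := by
        rw [frobNorm, hxx, Fintype.sum_prod_type, Fintype.sum_prod_type]
        congr 1
        rw [← Real.sqrt_sq (Finset.sum_nonneg fun i _ => sq_nonneg (x i)), sq, Finset.sum_mul_sum]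
        simp only [mul_pow]

theorem frobNorm_neg {p : ℕ} (Δ : Matrix (Fin p) (Fin p) ℝ) : frobNorm (-Δ) = frobNorm Δ := by
  simp [frobNorm]

theorem Matrix.IsHermitian.le_frobNorm_smul_one {p : ℕ} {Δ : Matrix (Fin p) (Fin p) ℝ}
    (hΔ : Δ.IsHermitian) : Δ ≤ frobNorm Δ • 1 := by
  rw [le_iff]
  refine PosSemidef.of_dotProduct_mulVec_nonneg
    ((isHermitian_one.smul (IsSelfAdjoint.all _)).sub hΔ) fun x => ?_
  rw [star_trivial, sub_mulVec, smul_mulVec, one_mulVec, dotProduct_sub, dotProduct_smul,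
    smul_eq_mul, sub_nonneg]
  exact dotProduct_mulVec_le_frobNorm_mul Δ x

theorem Matrix.IsHermitian.mem_Icc_frobNorm {p : ℕ} {Δ : Matrix (Fin p) (Fin p) ℝ}
    (hΔ : Δ.IsHermitian) : Δ ∈ Icc ((-frobNorm Δ) • 1) (frobNorm Δ • 1) :=
  ⟨neg_smul (frobNorm Δ) (1 : Matrix (Fin p) (Fin p) ℝ) ▸
    neg_le.mp (frobNorm_neg Δ ▸ hΔ.neg.le_frobNorm_smul_one), hΔ.le_frobNorm_smul_one⟩

theorem Matrix.IsHermitian.trace_mul_self {p : ℕ} {Δ : Matrix (Fin p) (Fin p) ℝ}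
    (hΔ : Δ.IsHermitian) : (Δ * Δ).trace = frobNorm Δ ^ 2 := by
  rw [frobNorm, Real.sq_sqrt (by positivity), trace]
  simp only [diag_apply, mul_apply]
  refine Finset.sum_congr rfl fun i _ => Finset.sum_congr rfl fun j _ => ?_
  rw [sq, ← hΔ.apply i j, star_trivial]

/-- margin (Taylor) lemma for the graphical Lasso.  If `Θ₀` is symmetric
positive definite with all eigenvalues in `[1/L, L]` and `Δ` is symmetric with
`‖Δ‖_F ≤ 1/(2L)`, then `Θ₀ + Δ` is positive definite with `λ_min(Θ₀+Δ) ≥ 1/(2L)`, and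
`E(Δ) := trace(ΔΣ₀) − (log det(Δ+Θ₀) − log det Θ₀) ≥ ‖Δ‖_F²/(2(L+1/(2L))²)`,
where `Σ₀ := Θ₀⁻¹`. -/
theorem stmt4 {p : ℕ} (L : ℝ) (hL : 1 ≤ L) (Θ₀ Δ : Matrix (Fin p) (Fin p) ℝ)
    (hΘ₀ : Θ₀.PosDef)
    (heig : ∀ i, 1 / L ≤ hΘ₀.isHermitian.eigenvalues i ∧ hΘ₀.isHermitian.eigenvalues i ≤ L)
    (hΔ : Δ.IsHermitian)
    (hF : frobNorm Δ ≤ 1 / (2 * L)) :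
    (Θ₀ + Δ).PosDef ∧
    (∀ (h : (Θ₀ + Δ).IsHermitian) (i : Fin p), 1 / (2 * L) ≤ h.eigenvalues i) ∧
    frobNorm Δ ^ 2 / (2 * (L + 1 / (2 * L)) ^ 2) ≤
      (Δ * Θ₀⁻¹).trace - (Real.log (Δ + Θ₀).det - Real.log Θ₀.det) := by
  have hL0 : 0 < L := by linarith
  have hΘ : Θ₀ ∈ Icc ((1 / L) • 1) (L • 1) :=
    ⟨hΘ₀.isHermitian.smul_one_le_iff.mpr fun i => (heig i).1,
      hΘ₀.isHermitian.le_smul_one_iff.mpr fun i => (heig i).2⟩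
  have hΔ' : Δ ∈ Icc ((-(1 / (2 * L))) • 1) ((1 / (2 * L)) • 1) :=
    ⟨(smul_one_le_smul_one (neg_le_neg hF)).trans hΔ.mem_Icc_frobNorm.1,
      hΔ.mem_Icc_frobNorm.2.trans (smul_one_le_smul_one hF)⟩
  have hpath : ∀ t ∈ Icc (0 : ℝ) 1,
      (1 / (2 * L)) • 1 ≤ Θ₀ + t • Δ ∧ Θ₀ + t • Δ ≤ (L + 1 / (2 * L)) • 1 := by
    intro t ht
    have h := add_smul_mem_Icc hΘ hΔ' (by positivity) ht
    rwa [show 1 / L - 1 / (2 * L) = 1 / (2 * L) by field_simp; ring] at h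
  have hPD : ∀ t ∈ Icc (0 : ℝ) 1, (Θ₀ + t • Δ).PosDef :=
    fun t ht => PosDef.of_smul_one_le (by positivity) (hpath t ht).1
  have h1 := hpath 1 ⟨zero_le_one, le_rfl⟩
  rw [one_smul] at h1
  refine ⟨PosDef.of_smul_one_le (by positivity) h1.1, fun h => h.smul_one_le_iff.mp h1.1, ?_⟩
  have := hΔ.trace_mul_self_div_le_trace_mul_inv_sub_log_det (by positivity)
    fun t ht => ⟨hPD t ht, (hpath t ht).2⟩
  rwa [hΔ.trace_mul_self, add_comm Θ₀ Δ] at this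
end

section
/- Let Σ₀ be an invertible p×p real matrix whose inverse Θ₀ := Σ₀⁻¹ is symmetric. Let Σ̂, Θ̂ and η be p×p real matrices satisfying Σ̂Θ̂ − I + η = 0. Then Θ̂ + Θ̂ᵀη = Θ̂ + Θ̂ᵀ − Θ̂ᵀΣ̂Θ̂, and the decomposition Θ̂ + Θ̂ᵀη − Θ₀ = −Θ₀(Σ̂ − Σ₀)Θ₀ + rem₀ + rem_reg holds, where rem₀ := −Θ₀(Σ̂ − Σ₀)(Θ̂ − Θ₀) and rem_reg := (Θ̂ − Θ₀)ᵀη. -/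
/-! Substituting `η = 1 - Σ̂Θ̂` makes both claims identities in the (noncommutative) ring of
matrices. After expanding, the two sides of the decomposition differ by `(1 - Θ₀Σ₀)Θ̂`, which
vanishes because `Θ₀` is a left inverse of `Σ₀`; symmetry of `Θ₀` is what turns
`(Θ̂ - Θ₀)ᵀ` into `Θ̂ᵀ - Θ₀`. -/

open Matrix

section Ring

variable {R : Type*} [Ring R]

theorem eq_one_sub_mul_of_mul_sub_one_add_eq_zero {s t η : R} (h : s * t - 1 + η = 0) :
    η = 1 - s * t := by
  rw [eq_neg_of_add_eq_zero_right h, neg_sub]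

theorem mul_bias_eq_sub {s t η : R} (a : R) (h : s * t - 1 + η = 0) :
    a * η = a - a * s * t := by
  rw [eq_one_sub_mul_of_mul_sub_one_add_eq_zero h, mul_sub, mul_one, mul_assoc]

theorem add_mul_bias_sub_eq_of_mul_eq_one {s₀ θ₀ s t η : R} (a : R) (hinv : θ₀ * s₀ = 1)
    (h : s * t - 1 + η = 0) :
    t + a * η - θ₀ = -(θ₀ * (s - s₀) * θ₀) - θ₀ * (s - s₀) * (t - θ₀) + (a - θ₀) * η := by
  rw [eq_one_sub_mul_of_mul_sub_one_add_eq_zero h, ← sub_eq_zero]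
  have hdiff : t + a * (1 - s * t) - θ₀ - (-(θ₀ * (s - s₀) * θ₀) - θ₀ * (s - s₀) * (t - θ₀)
      + (a - θ₀) * (1 - s * t)) = (1 - θ₀ * s₀) * t := by
    noncomm_ring
  rw [hdiff, hinv, sub_self, zero_mul]

end Ring

/-- de-biasing decomposition for an approximate inverse `Θ̂` of `Σ̂` with bias
term `η` satisfying `Σ̂Θ̂ − I + η = 0`, around `Θ₀ := Σ₀⁻¹` (assumed symmetric).
(`Shat` is `Σ̂`, `S₀` is `Σ₀`.) -/
theorem stmt7 {p : ℕ} (S₀ Shat Θhat η : Matrix (Fin p) (Fin p) ℝ)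
    (hS₀ : IsUnit S₀.det)
    (Θ₀ : Matrix (Fin p) (Fin p) ℝ) (hΘ₀ : Θ₀ = S₀⁻¹)
    (hsym : Θ₀.IsHermitian)
    (hkkt : Shat * Θhat - 1 + η = 0)
    (rem₀ remreg : Matrix (Fin p) (Fin p) ℝ)
    (hrem₀ : rem₀ = -(Θ₀ * (Shat - S₀) * (Θhat - Θ₀)))
    (hremreg : remreg = (Θhat - Θ₀)ᵀ * η) :
    Θhat + Θhatᵀ * η = Θhat + Θhatᵀ - Θhatᵀ * Shat * Θhat ∧
    Θhat + Θhatᵀ * η - Θ₀ = -(Θ₀ * (Shat - S₀) * Θ₀) + rem₀ + remreg := by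
  have hinv : Θ₀ * S₀ = 1 := hΘ₀ ▸ nonsing_inv_mul S₀ hS₀
  have hΘ₀T : Θ₀ᵀ = Θ₀ := (isHermitian_iff_isSymm.mp hsym).eq
  refine ⟨by rw [mul_bias_eq_sub _ hkkt, add_sub_assoc], ?_⟩
  rw [hrem₀, hremreg, transpose_sub, hΘ₀T, ← sub_eq_add_neg,
    add_mul_bias_sub_eq_of_mul_eq_one _ hinv hkkt]
end

section
/- Let X be a real n×p matrix with columns X₁,…,X_p and set Σ̂ := XᵀX/n. Fix j and let γ̂ ∈ ℝ^{p−1} (indexed by k ≠ j), let λ > 0, and let κ̂ ∈ ℝ^{p−1} satisfy the square-root Lasso KKT conditions X_{−j}ᵀ(X_j − X_{−j}γ̂)/n = λ τ̂ κ̂ and κ̂ᵀγ̂ = ‖γ̂‖₁, where τ̂ := (‖X_j − X_{−j}γ̂‖₂²/n)^{1/2} > 0 and X_{−j} is X with column j removed. Define τ̃² := τ̂² + λ τ̂ ‖γ̂‖₁, and let Θ̂_j ∈ ℝ^p be the vector with j-th entry 1/τ̃² and k-th entry −γ̂_k/τ̃² for k ≠ j, and let Ẑ_j ∈ ℝ^p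 be the vector with j-th entry 0 and k-th entry κ̂_k for k ≠ j. Then Σ̂ Θ̂_j − e_j − λ (τ̂/τ̃²) Ẑ_j = 0, where e_j is the j-th standard basis vector of ℝ^p. -/
open Matrix

/-!
Writing `X_{-j}` for `X` without its `j`-th column and `r = X_j - X_{-j} γ̂` for the residual,
`X Θ̂_j = r / τ̃²`, so `Σ̂ Θ̂_j = Xᵀ r / (n τ̃²)`. Off the diagonal, `X_kᵀ r / n = λ τ̂ κ̂_k` is the
KKT condition. On the diagonal, `X_jᵀ r = ‖r‖² + γ̂ᵀ X_{-j}ᵀ r`, and the KKT condition together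
with `κ̂ᵀ γ̂ = ‖γ̂‖₁` turns `X_jᵀ r / n` into `τ̂² + λ τ̂ ‖γ̂‖₁ = τ̃²`.
-/

section

variable {m ι R : Type*} [Fintype ι] [CommSemiring R]

theorem mulVec_dite_eq [DecidableEq ι] (X : Matrix m ι R) (j : ι) (c : R)
    (γ : {k // k ≠ j} → R) :
    X *ᵥ (fun k => if h : k = j then c else γ ⟨k, h⟩) =
      c • (fun i => X i j) + X.submatrix id Subtype.val *ᵥ γ := by
  ext i
  simp only [Pi.add_apply, Pi.smul_apply, smul_eq_mul, mulVec, dotProduct, submatrix_apply, id]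
  rw [Fintype.sum_eq_add_sum_subtype_ne _ j, dif_pos rfl, mul_comm]
  exact congrArg _ (Finset.sum_congr rfl fun k _ => by rw [dif_neg k.2])

variable [Fintype m]

theorem add_mulVec_dotProduct (A : Matrix m ι R) (r : m → R) (γ : ι → R) :
    (r + A *ᵥ γ) ⬝ᵥ r = r ⬝ᵥ r + γ ⬝ᵥ (Aᵀ *ᵥ r) := by
  rw [add_dotProduct, dotProduct_comm (A *ᵥ γ), dotProduct_mulVec, ← mulVec_transpose,
    dotProduct_comm γ]

theorem sqrtLasso_dotProduct_residual_div (A : Matrix m ι ℝ) (y r : m → ℝ) (γ κ : ι → ℝ)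
    (N lam τ : ℝ) (hr : r = y - A *ᵥ γ) (hτ : τ ^ 2 = r ⬝ᵥ r / N)
    (hkkt : ∀ k, (Aᵀ *ᵥ r) k / N = lam * τ * κ k) (hsub : κ ⬝ᵥ γ = ∑ k, |γ k|) :
    y ⬝ᵥ r / N = τ ^ 2 + lam * τ * ∑ k, |γ k| := by
  have hy : y = r + A *ᵥ γ := by rw [hr, sub_add_cancel]
  have hcorr : γ ⬝ᵥ (Aᵀ *ᵥ r) / N = lam * τ * (κ ⬝ᵥ γ) := by
    simp only [dotProduct, Finset.sum_div, Finset.mul_sum, mul_div_assoc, hkkt]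
    exact Finset.sum_congr rfl fun k _ => by ring
  rw [hy, add_mulVec_dotProduct, add_div, ← hτ, hcorr, hsub]

end

/-- the KKT conditions of the square-root Lasso rewritten as the
approximate-inverse identity `Σ̂ Θ̂_j − e_j − λ(τ̂/τ̃²)Ẑ_j = 0` for the `j`-th column of
the nodewise square-root Lasso estimator.  Here `X` is the design matrix, `γhat = γ̂` the
square-root Lasso coefficients (indexed by `k ≠ j`), `κ = κ̂` the subgradient,
`r = X_j − X_{−j}γ̂` the residual, `τhat = τ̂`, `τt2 = τ̃²`, `Θj = Θ̂_j` and `Zj = Ẑ_j`. -/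
theorem stmt16 {n p : ℕ} (X : Matrix (Fin n) (Fin p) ℝ) (j : Fin p)
    (γhat κ : {k : Fin p // k ≠ j} → ℝ) (lam : ℝ) (hlam : 0 < lam)
    (r : Fin n → ℝ) (hr : ∀ i, r i = X i j - ∑ k : {k : Fin p // k ≠ j}, X i k.1 * γhat k)
    (τhat : ℝ) (hτhat : τhat = Real.sqrt ((∑ i, (r i) ^ 2) / n)) (hτpos : 0 < τhat)
    (hkkt : ∀ k : {k : Fin p // k ≠ j},
      (∑ i, X i k.1 * r i) / n = lam * τhat * κ k)
    (hsub : ∑ k : {k : Fin p // k ≠ j}, κ k * γhat k = ∑ k : {k : Fin p // k ≠ j}, |γhat k|)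
    (τt2 : ℝ) (hτt2 : τt2 = τhat ^ 2 + lam * τhat * ∑ k : {k : Fin p // k ≠ j}, |γhat k|)
    (Shat : Matrix (Fin p) (Fin p) ℝ) (hShat : ∀ a b, Shat a b = (∑ i, X i a * X i b) / n)
    (Θj : Fin p → ℝ)
    (hΘj : ∀ k : Fin p, Θj k = if h : k = j then 1 / τt2 else -γhat ⟨k, h⟩ / τt2)
    (Zj : Fin p → ℝ)
    (hZj : ∀ k : Fin p, Zj k = if h : k = j then 0 else κ ⟨k, h⟩) :
    Shat *ᵥ Θj - Pi.single j 1 - (lam * τhat / τt2) • Zj = 0 := by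
  set A := X.submatrix id Subtype.val
  have hr' : r = (fun i => X i j) - A *ᵥ γhat := funext hr
  have hτ2 : τhat ^ 2 = r ⬝ᵥ r / n := by
    rw [hτhat, Real.sq_sqrt (by positivity)]
    simp only [dotProduct, sq]
  have hdiag : (Xᵀ *ᵥ r) j / n = τt2 :=
    hτt2 ▸ sqrtLasso_dotProduct_residual_div A _ r γhat κ n lam τhat hr' hτ2 hkkt hsub
  have hτt2pos : 0 < τt2 := by rw [hτt2]; positivity
  have hXΘ : X *ᵥ Θj = τt2⁻¹ • r := by
    have hΘ : Θj = fun k => if h : k = j then τt2⁻¹ else (-τt2⁻¹ • γhat) ⟨k, h⟩ := by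
      ext k; rw [hΘj]; split_ifs <;> simp [div_eq_inv_mul]
    rw [hΘ, mulVec_dite_eq, mulVec_smul, hr', smul_sub, neg_smul, sub_eq_add_neg]
  have hS : Shat = (n : ℝ)⁻¹ • (Xᵀ * X) := by
    ext a b; simp [hShat, mul_apply, div_eq_inv_mul]
  ext a
  have hSΘ : (Shat *ᵥ Θj) a = (Xᵀ *ᵥ r) a / n / τt2 := by
    rw [hS, smul_mulVec, ← mulVec_mulVec, hXΘ, mulVec_smul]
    simp [div_eq_inv_mul, mul_left_comm]
  simp only [Pi.sub_apply, Pi.smul_apply, smul_eq_mul, Pi.zero_apply, hSΘ, hZj]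
  by_cases ha : a = j
  · subst ha
    simp [hdiag, hτt2pos.ne']
  · rw [dif_neg ha, Pi.single_eq_of_ne ha,
      show (Xᵀ *ᵥ r) a / n = lam * τhat * κ ⟨a, ha⟩ from hkkt ⟨a, ha⟩]
    field_simp
    ring
end
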